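/- If m > 2, then in the localization S[x_1^{-1}] of S at the powers of x_1, the set of elements of the form f/x_1^k with f ∈ S^G and k ≥ 0 equals the F-subalgebra of S[x_1^{-1}] generated by x_1, …, x_m, N_1, N_2, t_3, …, t_{m+1} together with x_1^{-1}; i.e. S^G[x_1^{-1}] = F[x_1,…,x_m,N_1,N_2,t_3,…,t_{m+1}][x_1^{-1}]. -/

import Mathlib

/-!
STATEMENT 17: For the representation Ω^{−m}(F) of the Klein four group G = ⟨σ1,σ2⟩ over a
field F of characteristic 2 (action on S = F[x_1,…,x_m,y_1,…,y_{m+1}]: σ_i(x_j) = x_j,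
σ1(y_j) = y_j + x_j, σ2(y_j) = y_j + x_{j−1}, with x_0 = x_{m+1} = 0), if m > 2 then, in
the localization S[x_1^{-1}], the set of elements of the form f/x_1^k with f ∈ S^G and
k ≥ 0 equals the F-subalgebra generated by the images of x_1,…,x_m, N_1, N_2,
t_3,…,t_{m+1} together with x_1^{-1} (the unique element z with z·x_1 = 1).
-/

open MvPolynomial

noncomputable section

/-- The variable x_i (1-based index); by convention 0 for i outside {1,…,m}. -/
def xw (F : Type) [Field F] (m : ℕ) (i : ℕ) : MvPolynomial (Fin m ⊕ Fin (m + 1)) F :=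
  if h : 1 ≤ i ∧ i ≤ m then X (Sum.inl ⟨i - 1, by omega⟩) else 0

/-- The variable y_i (1-based index); by convention 0 for i outside {1,…,m+1}. -/
def yw (F : Type) [Field F] (m : ℕ) (i : ℕ) : MvPolynomial (Fin m ⊕ Fin (m + 1)) F :=
  if h : 1 ≤ i ∧ i ≤ m + 1 then X (Sum.inr ⟨i - 1, by omega⟩) else 0

/-- n_i = y_i² + x_i y_i. -/
def nw (F : Type) [Field F] (m : ℕ) (i : ℕ) : MvPolynomial (Fin m ⊕ Fin (m + 1)) F :=
  yw F m i ^ 2 + xw F m i * yw F m i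

/-- u_{ab} = x_a y_b + x_b y_a (with the zero conventions for out-of-range indices). -/
def uw (F : Type) [Field F] (m : ℕ) (a b : ℕ) : MvPolynomial (Fin m ⊕ Fin (m + 1)) F :=
  xw F m a * yw F m b + xw F m b * yw F m a

/-- N_i = n_i + Σ_{j=1}^{i−1} (u_{i−j,i+j} + u_{i−j,i+j−1}). -/
def Nw (F : Type) [Field F] (m : ℕ) (i : ℕ) : MvPolynomial (Fin m ⊕ Fin (m + 1)) F :=
  nw F m i + ∑ j ∈ Finset.Icc 1 (i - 1), (uw F m (i - j) (i + j) + uw F m (i - j) (i + j - 1))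

/-- t_j = u_{12}·x_{j−1} + u_{1j}·x_1. -/
def tw (F : Type) [Field F] (m : ℕ) (j : ℕ) : MvPolynomial (Fin m ⊕ Fin (m + 1)) F :=
  uw F m 1 2 * xw F m (j - 1) + uw F m 1 j * xw F m 1

/-- The invariant subalgebra S^G for G = ⟨σ1, σ2⟩. -/
def invSub {F : Type} [Field F] {τ : Type} (σ1 σ2 : MvPolynomial τ F ≃ₐ[F] MvPolynomial τ F) :
    Subalgebra F (MvPolynomial τ F) :=
  AlgHom.equalizer (σ1 : MvPolynomial τ F →ₐ[F] MvPolynomial τ F) (AlgHom.id F _) ⊓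
    AlgHom.equalizer (σ2 : MvPolynomial τ F →ₐ[F] MvPolynomial τ F) (AlgHom.id F _)

/-- The transfer Tr(f) = Σ_{g ∈ G} g·f for the Klein four group G = {1, σ1, σ2, σ1σ2}. -/
def trf {F : Type} [Field F] {τ : Type} (σ1 σ2 : MvPolynomial τ F ≃ₐ[F] MvPolynomial τ F)
    (f : MvPolynomial τ F) : MvPolynomial τ F :=
  f + σ1 f + σ2 f + σ1 (σ2 f)

/-- Products of two homogeneous G-invariants of positive degree; the span of this set over
S^G is (S^G_+)², the square of the ideal of S^G generated by the homogeneous invariants of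
positive degree.  An invariant is *indecomposable* iff it does not lie in this span. -/
def decompSet {F : Type} [Field F] {τ : Type}
    (σ1 σ2 : MvPolynomial τ F ≃ₐ[F] MvPolynomial τ F) : Set (MvPolynomial τ F) :=
  {f | ∃ a b : MvPolynomial τ F,
    (σ1 a = a ∧ σ2 a = a ∧ ∃ d, 0 < d ∧ a.IsHomogeneous d) ∧
    (σ1 b = b ∧ σ2 b = b ∧ ∃ d, 0 < d ∧ b.IsHomogeneous d) ∧ f = a * b}

/-! After inverting `x₁`, the relation `x₁² y_j = t_j + x_{j-1} u₁₂ + x₁ x_j y₁` (in characteristic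
2) expresses every `y_j` through `y₁`, `u₁₂` and the algebra `B` generated by the `x_i`, `N₁`, `N₂`,
the `t_j` and `x₁⁻¹`. Since `y₁² = N₁ + x₁ y₁` and `u₁₂² = x₁² N₂ + x₂² N₁ + x₁ t₃ + x₁² u₁₂`, every
element of `S[x₁⁻¹]` is `a + b y₁` with `a, b ∈ B[u₁₂]`, and `a = c + d u₁₂` with `c, d ∈ B`. Now
`σ₁` fixes `B[u₁₂]` and sends `y₁ ↦ y₁ + x₁`, while `σ₂` fixes `B` and sends `u₁₂ ↦ u₁₂ + x₁²`; as
`x₁` is a unit, an invariant has `b = 0`, then `d = 0`, so it lies in `B`. -/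

section Subalgebra

variable {R A : Type*} [CommRing R] [CommRing A] [Algebra R A]

lemma Subalgebra.mem_of_pow_mul_mem (D : Subalgebra R A) {q q' w : A} (hq : q * q' = 1)
    (hq' : q' ∈ D) {k : ℕ} (h : q ^ k * w ∈ D) : w ∈ D := by
  have hw : w = q' ^ k * (q ^ k * w) := by
    rw [← mul_assoc, ← mul_pow, mul_comm q', hq, one_pow, one_mul]
  rw [hw]
  exact mul_mem (pow_mem hq' k) h

lemma Subalgebra.exists_eq_add_mul_of_mem_adjoin_insert {B : Subalgebra R A} {y p q : A}
    (hp : p ∈ B) (hq : q ∈ B) (hy : y ^ 2 = p + q * y) {z : A}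
    (hz : z ∈ Algebra.adjoin R (insert y (B : Set A))) : ∃ a ∈ B, ∃ b ∈ B, z = a + b * y := by
  induction hz using Algebra.adjoin_induction with
  | mem z hz =>
    rcases hz with rfl | hz
    · exact ⟨0, zero_mem B, 1, one_mem B, by ring⟩
    · exact ⟨z, hz, 0, zero_mem B, by ring⟩
  | algebraMap r => exact ⟨algebraMap R A r, B.algebraMap_mem r, 0, zero_mem B, by ring⟩
  | add z z' _ _ ih ih' =>
    obtain ⟨a, ha, b, hb, rfl⟩ := ih
    obtain ⟨a', ha', b', hb', rfl⟩ := ih'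
    exact ⟨a + a', add_mem ha ha', b + b', add_mem hb hb', by ring⟩
  | mul z z' _ _ ih ih' =>
    obtain ⟨a, ha, b, hb, rfl⟩ := ih
    obtain ⟨a', ha', b', hb', rfl⟩ := ih'
    refine ⟨a * a' + b * b' * p, add_mem (mul_mem ha ha') (mul_mem (mul_mem hb hb') hp),
      a * b' + a' * b + b * b' * q, add_mem (add_mem (mul_mem ha hb') (mul_mem ha' hb))
        (mul_mem (mul_mem hb hb') hq), ?_⟩
    linear_combination b * b' * hy

lemma eq_zero_of_map_add_mul_eq {τ : A →ₐ[R] A} {a b y q : A} (hq : IsUnit q) (ha : τ a = a)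
    (hb : τ b = b) (hy : τ y = y + q) (h : τ (a + b * y) = a + b * y) : b = 0 := by
  rw [map_add, map_mul, ha, hb, hy] at h
  exact hq.mul_left_eq_zero.mp (by linear_combination h)

variable {S : Type*} [CommRing S] [Algebra R S] [Algebra S A]

lemma adjoin_image_union_inv_subset [IsScalarTower R S A] (T : Subalgebra R S) {x : S}
    (hx : x ∈ T) :
    (Algebra.adjoin R (algebraMap S A '' T ∪ {z | z * algebraMap S A x = 1}) : Set A) ⊆
      {z | ∃ f ∈ T, ∃ k : ℕ, algebraMap S A x ^ k * z = algebraMap S A f} := by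
  intro z hz
  induction hz using Algebra.adjoin_induction with
  | mem z hz =>
    rcases hz with ⟨f, hf, rfl⟩ | hz
    · exact ⟨f, hf, 0, by rw [pow_zero, one_mul]⟩
    · exact ⟨1, one_mem T, 1, by rw [pow_one, mul_comm, map_one]; exact hz⟩
  | algebraMap r =>
    exact ⟨algebraMap R S r, T.algebraMap_mem r, 0, by
      rw [pow_zero, one_mul, IsScalarTower.algebraMap_apply R S A]⟩
  | add z z' _ _ ih ih' =>
    obtain ⟨f, hf, k, hk⟩ := ih
    obtain ⟨f', hf', k', hk'⟩ := ih'
    refine ⟨x ^ k' * f + x ^ k * f', add_mem (mul_mem (pow_mem hx _) hf)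
      (mul_mem (pow_mem hx _) hf'), k + k', ?_⟩
    simp only [map_add, map_mul, map_pow]
    linear_combination algebraMap S A x ^ k' * hk + algebraMap S A x ^ k * hk'
  | mul z z' _ _ ih ih' =>
    obtain ⟨f, hf, k, hk⟩ := ih
    obtain ⟨f', hf', k', hk'⟩ := ih'
    refine ⟨f * f', mul_mem hf hf', k + k', ?_⟩
    rw [map_mul]
    linear_combination algebraMap S A x ^ k' * z' * hk + algebraMap S A f * hk'

lemma adjoin_image_union_inv_le_equalizer (τ : A →ₐ[R] A) (σ : S →ₐ[R] S)
    (hτ : ∀ f, τ (algebraMap S A f) = algebraMap S A (σ f)) {s : Set S} (hs : ∀ f ∈ s, σ f = f)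
    {x : S} (hx : σ x = x) :
    Algebra.adjoin R (algebraMap S A '' s ∪ {z | z * algebraMap S A x = 1}) ≤
      AlgHom.equalizer τ (AlgHom.id R A) := by
  refine Algebra.adjoin_le ?_
  rintro z (⟨f, hf, rfl⟩ | hz)
  · simp [hτ, hs f hf]
  · have hτz : τ z * algebraMap S A x = 1 := by rw [← hx, ← hτ, ← map_mul, hz, map_one]
    exact left_inv_eq_right_inv hτz (by rw [mul_comm]; exact hz)

lemma IsLocalization.Away.exists_algHom_comp [IsScalarTower R S A] {x : S}
    [IsLocalization.Away x A] (σ : S →ₐ[R] S) (hx : σ x = x) :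
    ∃ τ : A →ₐ[R] A, ∀ f, τ (algebraMap S A f) = algebraMap S A (σ f) := by
  have hu : IsUnit (((IsScalarTower.toAlgHom R S A).comp σ) x) := by
    simpa [hx] using IsLocalization.Away.algebraMap_isUnit (S := A) x
  exact ⟨IsLocalization.Away.liftAlgHom x hu, IsLocalization.Away.lift_eq x hu⟩

end Subalgebra

section Omega

variable {F : Type} [Field F] {m : ℕ}

local notation "𝕊" => MvPolynomial (Fin m ⊕ Fin (m + 1)) F

lemma xw_eq_zero {i : ℕ} (h : ¬(1 ≤ i ∧ i ≤ m)) : xw F m i = 0 := dif_neg h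

lemma yw_eq_zero {i : ℕ} (h : ¬(1 ≤ i ∧ i ≤ m + 1)) : yw F m i = 0 := dif_neg h

lemma xw_zero : xw F m 0 = 0 := xw_eq_zero (by omega)

lemma xw_succ (i : Fin m) : xw F m (i + 1) = X (Sum.inl i) := by
  simp [xw]

lemma yw_succ (i : Fin (m + 1)) : yw F m (i + 1) = X (Sum.inr i) := by
  simp [yw, Nat.le_of_lt_succ i.isLt]

lemma Nw_one : Nw F m 1 = yw F m 1 ^ 2 + xw F m 1 * yw F m 1 := by
  simp [Nw, nw]

lemma Nw_two : Nw F m 2 = yw F m 2 ^ 2 + xw F m 2 * yw F m 2 + uw F m 1 3 + uw F m 1 2 := by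
  simp [Nw, nw, add_assoc]

lemma map_yw_of_forall_le (σ : 𝕊 →ₐ[F] 𝕊) {g : ℕ → 𝕊} (hg : ∀ i, ¬(1 ≤ i ∧ i ≤ m + 1) → g i = 0)
    (h : ∀ i, 1 ≤ i → i ≤ m + 1 → σ (yw F m i) = yw F m i + g i) (i : ℕ) :
    σ (yw F m i) = yw F m i + g i := by
  by_cases hi : 1 ≤ i ∧ i ≤ m + 1
  · exact h i hi.1 hi.2
  · rw [yw_eq_zero hi, map_zero, hg i hi, add_zero]

variable (F m) in
def invGenerators : Set 𝕊 :=
  (xw F m '' Set.Icc 1 m) ∪ {Nw F m 1, Nw F m 2} ∪ (tw F m '' Set.Icc 3 (m + 1))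

lemma map_invGenerators (σ : 𝕊 →ₐ[F] 𝕊) (hx : ∀ i, σ (xw F m i) = xw F m i)
    (hN₁ : σ (Nw F m 1) = Nw F m 1) (hN₂ : σ (Nw F m 2) = Nw F m 2)
    (ht : ∀ j, σ (tw F m j) = tw F m j) : ∀ f ∈ invGenerators F m, σ f = f := by
  rintro f ((⟨i, -, rfl⟩ | hf) | ⟨j, -, rfl⟩)
  · exact hx i
  · rcases hf with rfl | rfl
    · exact hN₁
    · exact hN₂
  · exact ht j

section CharTwo

variable [CharP F 2]

lemma yw_one_sq : yw F m 1 ^ 2 = Nw F m 1 + xw F m 1 * yw F m 1 := by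
  rw [Nw_one]; grind

lemma uw_one_two_sq : uw F m 1 2 ^ 2 = xw F m 1 ^ 2 * Nw F m 2 + xw F m 2 ^ 2 * Nw F m 1
    + xw F m 1 * tw F m 3 + xw F m 1 ^ 2 * uw F m 1 2 := by
  simp only [Nw_one, Nw_two, tw, uw]; grind

lemma xw_one_sq_mul_yw (j : ℕ) : xw F m 1 ^ 2 * yw F m j =
    tw F m j + xw F m (j - 1) * uw F m 1 2 + xw F m 1 * xw F m j * yw F m 1 := by
  simp only [tw, uw]; grind

lemma tw_eq_zero {j : ℕ} (hj : j ≤ 2 ∨ m + 1 < j) : tw F m j = 0 := by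
  rcases hj with hj | hj
  · interval_cases j <;>
      simp only [tw, uw, Nat.reduceSub, xw_zero, yw_eq_zero (m := m) (i := 0) (by omega)] <;> grind
  · simp [tw, uw, xw_eq_zero (m := m) (i := j) (by omega),
      xw_eq_zero (m := m) (i := j - 1) (by omega), yw_eq_zero (m := m) (i := j) (by omega)]

end CharTwo

section ShiftSame

variable [CharP F 2] (σ : MvPolynomial (Fin m ⊕ Fin (m + 1)) F →ₐ[F]
    MvPolynomial (Fin m ⊕ Fin (m + 1)) F)
  (hx : ∀ i, σ (xw F m i) = xw F m i) (hy : ∀ i, σ (yw F m i) = yw F m i + xw F m i)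
include hx hy

lemma map_uw_of_shift_same (a b : ℕ) : σ (uw F m a b) = uw F m a b := by
  simp only [uw, map_add, map_mul, hx, hy]; grind

lemma map_invGenerators_of_shift_same : ∀ f ∈ invGenerators F m, σ f = f := by
  refine map_invGenerators σ hx ?_ ?_ fun j => ?_
  · simp only [Nw_one, map_add, map_mul, map_pow, hx, hy]; grind
  · simp only [Nw_two, map_add, map_mul, map_pow, hx, hy, map_uw_of_shift_same σ hx hy]; grind
  · simp only [tw, map_add, map_mul, hx, map_uw_of_shift_same σ hx hy]

end ShiftSame

section ShiftPrev

variable (σ : MvPolynomial (Fin m ⊕ Fin (m + 1)) F →ₐ[F] MvPolynomial (Fin m ⊕ Fin (m + 1)) F)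
  (hx : ∀ i, σ (xw F m i) = xw F m i) (hy : ∀ i, σ (yw F m i) = yw F m i + xw F m (i - 1))
include hx hy

lemma map_uw_of_shift_prev (a b : ℕ) :
    σ (uw F m a b) = uw F m a b + xw F m a * xw F m (b - 1) + xw F m b * xw F m (a - 1) := by
  simp only [uw, map_add, map_mul, hx, hy]; ring

lemma map_invGenerators_of_shift_prev [CharP F 2] : ∀ f ∈ invGenerators F m, σ f = f := by
  refine map_invGenerators σ hx ?_ ?_ fun j => ?_
  · simp [Nw_one, hx, hy, xw_zero]
  · simp only [Nw_two, map_add, map_mul, map_pow, hx, hy, map_uw_of_shift_prev σ hx hy,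
      Nat.reduceSub, xw_zero]
    grind
  · simp only [tw, map_add, map_mul, hx, map_uw_of_shift_prev σ hx hy, Nat.reduceSub, xw_zero]
    grind

end ShiftPrev

section Localized

local notation "ι" => algebraMap 𝕊 (Localization.Away (xw F m 1))

variable (F m) in
def generatedAlgebra : Subalgebra F (Localization.Away (xw F m 1)) :=
  Algebra.adjoin F (ι '' invGenerators F m ∪ {z | z * ι (xw F m 1) = 1})

lemma algebraMap_xw_mem (i : ℕ) : ι (xw F m i) ∈ generatedAlgebra F m := by
  by_cases hi : 1 ≤ i ∧ i ≤ m
  · exact Algebra.subset_adjoin (Or.inl ⟨_, Or.inl (Or.inl ⟨i, hi, rfl⟩), rfl⟩)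
  · rw [xw_eq_zero hi, map_zero]
    exact zero_mem _

lemma algebraMap_Nw_one_mem : ι (Nw F m 1) ∈ generatedAlgebra F m :=
  Algebra.subset_adjoin (Or.inl ⟨_, Or.inl (Or.inr (Set.mem_insert _ _)), rfl⟩)

lemma algebraMap_Nw_two_mem : ι (Nw F m 2) ∈ generatedAlgebra F m :=
  Algebra.subset_adjoin (Or.inl ⟨_, Or.inl (Or.inr (Set.mem_insert_of_mem _ rfl)), rfl⟩)

lemma algebraMap_tw_mem [CharP F 2] (j : ℕ) : ι (tw F m j) ∈ generatedAlgebra F m := by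
  by_cases hj : 3 ≤ j ∧ j ≤ m + 1
  · exact Algebra.subset_adjoin (Or.inl ⟨_, Or.inr ⟨j, hj, rfl⟩, rfl⟩)
  · rw [tw_eq_zero (by omega), map_zero]
    exact zero_mem _

lemma invSelf_mem : IsLocalization.Away.invSelf (xw F m 1) ∈ generatedAlgebra F m :=
  Algebra.subset_adjoin (Or.inr ((mul_comm _ _).trans (IsLocalization.Away.mul_invSelf _)))

lemma algebraMap_mem_adjoin_yw_one_uw [CharP F 2] (f : 𝕊) :
    ι f ∈ Algebra.adjoin F (insert (ι (yw F m 1))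
      (Algebra.adjoin F (insert (ι (uw F m 1 2)) (generatedAlgebra F m : Set _)) : Set _)) := by
  set D := Algebra.adjoin F (insert (ι (yw F m 1))
      (Algebra.adjoin F (insert (ι (uw F m 1 2)) (generatedAlgebra F m : Set _)) : Set _))
  have hBD : ∀ b ∈ generatedAlgebra F m, b ∈ D := fun b hb =>
    Algebra.subset_adjoin (Or.inr (Algebra.subset_adjoin (Or.inr hb)))
  have hWD : ι (uw F m 1 2) ∈ D :=
    Algebra.subset_adjoin (Or.inr (Algebra.subset_adjoin (Set.mem_insert _ _)))
  have hYD : ι (yw F m 1) ∈ D := Algebra.subset_adjoin (Set.mem_insert _ _)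
  have hXD : ∀ n, ι (X n) ∈ D := by
    rintro (i | i)
    · rw [← xw_succ]
      exact hBD _ (algebraMap_xw_mem _)
    · refine D.mem_of_pow_mul_mem (IsLocalization.Away.mul_invSelf (xw F m 1))
        (hBD _ invSelf_mem) (k := 2) ?_
      rw [← yw_succ, ← map_pow, ← map_mul, xw_one_sq_mul_yw, map_add, map_add, map_mul, map_mul,
        map_mul]
      exact add_mem (add_mem (hBD _ (algebraMap_tw_mem _))
        (mul_mem (hBD _ (algebraMap_xw_mem _)) hWD))
        (mul_mem (mul_mem (hBD _ (algebraMap_xw_mem _)) (hBD _ (algebraMap_xw_mem _))) hYD)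
  induction f using MvPolynomial.induction_on with
  | C r => exact D.algebraMap_mem r
  | add p q hp hq => rw [map_add]; exact add_mem hp hq
  | mul_X p n hp => rw [map_mul]; exact mul_mem hp (hXD n)

lemma algebraMap_mem_generatedAlgebra_of_invariant [CharP F 2] (σ₁ σ₂ : 𝕊 →ₐ[F] 𝕊)
    (hx₁ : ∀ i, σ₁ (xw F m i) = xw F m i) (hx₂ : ∀ i, σ₂ (xw F m i) = xw F m i)
    (hy₁ : ∀ i, σ₁ (yw F m i) = yw F m i + xw F m i)
    (hy₂ : ∀ i, σ₂ (yw F m i) = yw F m i + xw F m (i - 1))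
    {f : 𝕊} (hf₁ : σ₁ f = f) (hf₂ : σ₂ f = f) : ι f ∈ generatedAlgebra F m := by
  set B := generatedAlgebra F m
  have hQ : IsUnit (ι (xw F m 1)) := IsLocalization.Away.algebraMap_isUnit _
  obtain ⟨τ₁, hτ₁⟩ :=
    IsLocalization.Away.exists_algHom_comp (A := Localization.Away (xw F m 1)) σ₁ (hx₁ 1)
  obtain ⟨τ₂, hτ₂⟩ :=
    IsLocalization.Away.exists_algHom_comp (A := Localization.Away (xw F m 1)) σ₂ (hx₂ 1)
  have hB₁ : B ≤ AlgHom.equalizer τ₁ (AlgHom.id F _) := adjoin_image_union_inv_le_equalizer τ₁ σ₁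
    hτ₁ (map_invGenerators_of_shift_same σ₁ hx₁ hy₁) (hx₁ 1)
  have hB₂ : B ≤ AlgHom.equalizer τ₂ (AlgHom.id F _) := adjoin_image_union_inv_le_equalizer τ₂ σ₂
    hτ₂ (map_invGenerators_of_shift_prev σ₂ hx₂ hy₂) (hx₂ 1)
  set C := Algebra.adjoin F (insert (ι (uw F m 1 2)) (B : Set _))
  have hC₁ : C ≤ AlgHom.equalizer τ₁ (AlgHom.id F _) := by
    refine Algebra.adjoin_le (Set.insert_subset ?_ hB₁)
    simp [hτ₁, map_uw_of_shift_same σ₁ hx₁ hy₁]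
  obtain ⟨a, ha, b, hb, hab⟩ := Subalgebra.exists_eq_add_mul_of_mem_adjoin_insert (B := C)
    (Algebra.subset_adjoin (Or.inr algebraMap_Nw_one_mem))
    (Algebra.subset_adjoin (Or.inr (algebraMap_xw_mem 1)))
    (by rw [← map_mul, ← map_pow, ← map_add, yw_one_sq]) (algebraMap_mem_adjoin_yw_one_uw f)
  have hb0 : b = 0 := eq_zero_of_map_add_mul_eq hQ (hC₁ ha) (hC₁ hb)
    (by rw [hτ₁, hy₁, map_add]) (by rw [← hab, hτ₁, hf₁])
  rw [hb0, zero_mul, add_zero] at hab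
  have hr : ι (xw F m 1 ^ 2 * Nw F m 2 + xw F m 2 ^ 2 * Nw F m 1 + xw F m 1 * tw F m 3) ∈ B := by
    simp only [map_add, map_mul, map_pow]
    exact add_mem (add_mem (mul_mem (pow_mem (algebraMap_xw_mem 1) 2) algebraMap_Nw_two_mem)
      (mul_mem (pow_mem (algebraMap_xw_mem 2) 2) algebraMap_Nw_one_mem))
      (mul_mem (algebraMap_xw_mem 1) (algebraMap_tw_mem 3))
  obtain ⟨c, hc, d, hd, hcd⟩ := Subalgebra.exists_eq_add_mul_of_mem_adjoin_insert hr
    (pow_mem (algebraMap_xw_mem 1) 2)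
    (by simp only [← map_mul, ← map_pow, ← map_add, uw_one_two_sq]) ha
  have hd0 : d = 0 := eq_zero_of_map_add_mul_eq (hQ.pow 2) (hB₂ hc) (hB₂ hd)
    (by rw [hτ₂, map_uw_of_shift_prev σ₂ hx₂ hy₂ 1 2]; simp [xw_zero, sq])
    (by rw [← hcd, ← hab, hτ₂, hf₂])
  rw [hab, hcd, hd0, zero_mul, add_zero]
  exact hc

end Localized

end Omega

theorem stmt_17_general (F : Type) [Field F] [CharP F 2] (m : ℕ)
    (σ1 σ2 : MvPolynomial (Fin m ⊕ Fin (m + 1)) F ≃ₐ[F] MvPolynomial (Fin m ⊕ Fin (m + 1)) F)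
    (hσ1x : ∀ i, σ1 (xw F m i) = xw F m i)
    (hσ2x : ∀ i, σ2 (xw F m i) = xw F m i)
    (hσ1y : ∀ i, 1 ≤ i → i ≤ m + 1 → σ1 (yw F m i) = yw F m i + xw F m i)
    (hσ2y : ∀ i, 1 ≤ i → i ≤ m + 1 → σ2 (yw F m i) = yw F m i + xw F m (i - 1)) :
    {z : Localization.Away (xw F m 1) | ∃ (f : MvPolynomial (Fin m ⊕ Fin (m + 1)) F) (k : ℕ),
        σ1 f = f ∧ σ2 f = f ∧
        algebraMap (MvPolynomial (Fin m ⊕ Fin (m + 1)) F) (Localization.Away (xw F m 1))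
            (xw F m 1) ^ k * z
          = algebraMap (MvPolynomial (Fin m ⊕ Fin (m + 1)) F) (Localization.Away (xw F m 1)) f}
      = ↑(Algebra.adjoin F
          ((algebraMap (MvPolynomial (Fin m ⊕ Fin (m + 1)) F) (Localization.Away (xw F m 1)) ''
              ((xw F m '' Set.Icc 1 m) ∪ {Nw F m 1, Nw F m 2} ∪
                (tw F m '' Set.Icc 3 (m + 1)))) ∪
            {z : Localization.Away (xw F m 1) |
              z * algebraMap (MvPolynomial (Fin m ⊕ Fin (m + 1)) F)
                (Localization.Away (xw F m 1)) (xw F m 1) = 1})) := by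
  change _ = (generatedAlgebra F m : Set (Localization.Away (xw F m 1)))
  have hy₁ := map_yw_of_forall_le (σ1 : _ →ₐ[F] _) (g := xw F m)
    (fun i hi => xw_eq_zero (by omega)) hσ1y
  have hy₂ := map_yw_of_forall_le (σ2 : _ →ₐ[F] _) (g := fun i => xw F m (i - 1))
    (fun i hi => xw_eq_zero (by omega)) hσ2y
  refine Set.Subset.antisymm ?_ ?_
  · rintro z ⟨f, k, hf₁, hf₂, hk⟩
    refine Subalgebra.mem_of_pow_mul_mem _ (IsLocalization.Away.mul_invSelf (xw F m 1))
      invSelf_mem (k := k) ?_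
    rw [hk]
    exact algebraMap_mem_generatedAlgebra_of_invariant σ1 σ2 hσ1x hσ2x hy₁ hy₂ hf₁ hf₂
  · have hgen : invGenerators F m ⊆ invSub σ1 σ2 := fun f hf =>
      ⟨map_invGenerators_of_shift_same _ hσ1x hy₁ f hf,
        map_invGenerators_of_shift_prev _ hσ2x hy₂ f hf⟩
    intro z hz
    obtain ⟨f, ⟨hf₁, hf₂⟩, k, hk⟩ := adjoin_image_union_inv_subset (invSub σ1 σ2)
      (x := xw F m 1) ⟨hσ1x 1, hσ2x 1⟩
      (Algebra.adjoin_mono (Set.union_subset_union_left _ (Set.image_mono hgen)) hz)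
    exact ⟨f, k, hf₁, hf₂, hk⟩

theorem stmt_17 (F : Type) [Field F] [CharP F 2] (m : ℕ) (hm : 2 < m)
    (σ1 σ2 : MvPolynomial (Fin m ⊕ Fin (m + 1)) F ≃ₐ[F] MvPolynomial (Fin m ⊕ Fin (m + 1)) F)
    (hσ1x : ∀ i, σ1 (xw F m i) = xw F m i)
    (hσ2x : ∀ i, σ2 (xw F m i) = xw F m i)
    (hσ1y : ∀ i, 1 ≤ i → i ≤ m + 1 → σ1 (yw F m i) = yw F m i + xw F m i)
    (hσ2y : ∀ i, 1 ≤ i → i ≤ m + 1 → σ2 (yw F m i) = yw F m i + xw F m (i - 1)) :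
    {z : Localization.Away (xw F m 1) | ∃ (f : MvPolynomial (Fin m ⊕ Fin (m + 1)) F) (k : ℕ),
        σ1 f = f ∧ σ2 f = f ∧
        algebraMap (MvPolynomial (Fin m ⊕ Fin (m + 1)) F) (Localization.Away (xw F m 1))
            (xw F m 1) ^ k * z
          = algebraMap (MvPolynomial (Fin m ⊕ Fin (m + 1)) F) (Localization.Away (xw F m 1)) f}
      = ↑(Algebra.adjoin F
          ((algebraMap (MvPolynomial (Fin m ⊕ Fin (m + 1)) F) (Localization.Away (xw F m 1)) ''
              ((xw F m '' Set.Icc 1 m) ∪ {Nw F m 1, Nw F m 2} ∪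
                (tw F m '' Set.Icc 3 (m + 1)))) ∪
            {z : Localization.Away (xw F m 1) |
              z * algebraMap (MvPolynomial (Fin m ⊕ Fin (m + 1)) F)
                (Localization.Away (xw F m 1)) (xw F m 1) = 1})) :=
  stmt_17_general F m σ1 σ2 hσ1x hσ2x hσ1y hσ2y
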